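/- arXiv:2507.08068 — 2 statements merged into one kernel-verified Lean document; each statement's English description precedes it below -/
import Mathlib

section
/- Let π_ref be a probability distribution on a countable set Y, R: Y → ℝ bounded, β > 0, and N a positive integer. Define iteratively π₀ = π_ref and π_{k+1}(y) = π_k(y)·exp(R(y)/β)/Z_k where Z_k normalizes. Then π_N(y) = π_ref(y)·exp(N·R(y)/β)/Z for the appropriate normalizer Z; i.e., N iterations of KL-regularized optimization with coefficient β yield the same policy as a single optimization with coefficient β/N. -/
/-! Each step multiplies the current policy pointwise by `exp (R / β)` and renormalizes. Since
renormalizing twice is the same as renormalizing once (`reweight_reweight`), `N` steps amount to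
a single reweighting of `π_ref` by `exp (R / β) ^ N = exp (N R / β)`. Boundedness of `R` keeps
every normalizer finite and positive along the way. -/

section Reweight

variable {Y : Type*}

noncomputable def reweight (q w : Y → ℝ) (y : Y) : ℝ :=
  q y * w y / ∑' y', q y' * w y'

theorem reweight_reweight (q v w : Y → ℝ) (hv : ∑' y, q y * v y ≠ 0) :
    reweight (reweight q v) w = reweight q (v * w) := by
  funext y
  simp only [reweight, Pi.mul_apply, div_mul_eq_mul_div, tsum_div_const, mul_assoc]
  rw [div_div_div_cancel_right₀ hv]

end Reweight

namespace PMF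

variable {Y : Type*} (p : PMF Y)

theorem tsum_toReal : ∑' y, (p y).toReal = 1 := by
  rw [← ENNReal.tsum_toReal_eq p.apply_ne_top, p.tsum_coe, ENNReal.toReal_one]

theorem summable_toReal_mul_exp {g : Y → ℝ} (hg : BddAbove (Set.range g)) :
    Summable fun y => (p y).toReal * Real.exp (g y) := by
  obtain ⟨C, hC⟩ := hg
  have hp : Summable fun y => (p y).toReal :=
    ENNReal.summable_toReal (p.tsum_coe ▸ ENNReal.one_ne_top)
  refine (hp.mul_right (Real.exp C)).of_nonneg_of_le (fun y => by positivity) fun y => ?_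
  gcongr
  exact hC ⟨y, rfl⟩

theorem tsum_toReal_mul_exp_pos {g : Y → ℝ} (hg : BddAbove (Set.range g)) :
    0 < ∑' y, (p y).toReal * Real.exp (g y) := by
  obtain ⟨y₀, hy₀⟩ := p.support_nonempty
  have hpy₀ : 0 < (p y₀).toReal := ENNReal.toReal_pos hy₀ (p.apply_ne_top y₀)
  exact (p.summable_toReal_mul_exp hg).tsum_pos (fun y => by positivity) y₀ (by positivity)

end PMF

theorem bddAbove_range_natCast_mul_div {Y : Type*} {R : Y → ℝ} (hR : ∃ C, ∀ y, |R y| ≤ C)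
    (k : ℕ) (β : ℝ) : BddAbove (Set.range fun y => (k : ℝ) * R y / β) := by
  obtain ⟨C, hC⟩ := hR
  refine ⟨k * C / |β|, Set.forall_mem_range.2 fun y => ?_⟩
  calc (k : ℝ) * R y / β ≤ |(k : ℝ) * R y / β| := le_abs_self _
    _ = k * |R y| / |β| := by rw [abs_div, abs_mul, Nat.abs_cast]
    _ ≤ k * C / |β| := by gcongr; exact hC y

theorem stmt11_general {Y : Type*} (p : PMF Y) (R : Y → ℝ) (hR : ∃ C, ∀ y, |R y| ≤ C)
    (β : ℝ) (N : ℕ)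
    (π : ℕ → Y → ℝ)
    (h0 : ∀ y, π 0 y = (p y).toReal)
    (hstep : ∀ k y, π (k + 1) y
      = π k y * Real.exp (R y / β) / ∑' y', π k y' * Real.exp (R y' / β)) :
    ∀ y, π N y
      = (p y).toReal * Real.exp ((N : ℝ) * R y / β)
          / ∑' y', (p y').toReal * Real.exp ((N : ℝ) * R y' / β) := by
  suffices h : ∀ k : ℕ, π k = reweight (fun y => (p y).toReal) fun y => Real.exp (k * R y / β) from
    fun y => congrFun (h N) y
  intro k
  induction k with
  | zero =>
    funext y
    simp [reweight, h0, p.tsum_toReal]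
  | succ k ih =>
    have hstep' : π (k + 1) = reweight (π k) fun y => Real.exp (R y / β) := funext (hstep k)
    rw [hstep', ih, reweight_reweight _ _ _ (p.tsum_toReal_mul_exp_pos
      (bddAbove_range_natCast_mul_div hR k β)).ne']
    congr 1
    funext y
    rw [Pi.mul_apply, ← Real.exp_add]
    congr 1
    push_cast
    ring

/-- `N` iterations of KL-regularized optimization with coefficient `β`, each time replacing
the reference policy by the previous optimum, yield the policy obtained from a single
optimization with coefficient `β/N`, i.e. `π_N(y) = π_ref(y) exp(N R(y)/β)/Z`. -/
theorem stmt11 {Y : Type*} (p : PMF Y) (R : Y → ℝ) (hR : ∃ C, ∀ y, |R y| ≤ C)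
    (β : ℝ) (hβ : 0 < β) (N : ℕ) (hN : 0 < N)
    (π : ℕ → Y → ℝ)
    (h0 : ∀ y, π 0 y = (p y).toReal)
    (hstep : ∀ k y, π (k + 1) y
      = π k y * Real.exp (R y / β) / ∑' y', π k y' * Real.exp (R y' / β)) :
    ∀ y, π N y
      = (p y).toReal * Real.exp ((N : ℝ) * R y / β)
          / ∑' y', (p y').toReal * Real.exp ((N : ℝ) * R y' / β) :=
  stmt11_general p R hR β N π h0 hstep
end

section
/- Let f, g : [0,1] → ℝ be C^∞ strictly increasing functions with f(1) = g(1) = 0 and f'(1) = g'(1) = 1. For β > 0 let p_f(t) = exp(f(t)/β)/Z_f and p_g(t) = exp(g(t)/β)/Z_g be probability densities on [0,1] with Z_f, Z_g the respective normalizers. Then the KL divergence D_KL(p_f ‖ p_g) = O(β) as β → 0⁺; in particular the two exponentially tilted distributions converge to each other in KL divergence at a linear rate in β. -/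
open MeasureTheory intervalIntegral Set

private lemma sq_le_exp {x : ℝ} (hx : 0 ≤ x) : x^2 ≤ 4 * Real.exp x := by
  have e := Real.add_one_le_exp (x/2)
  have m : Real.exp (x/2) * Real.exp (x/2) = Real.exp x := by
    rw [← Real.exp_add]; ring_nf
  nlinarith [Real.exp_pos (x/2)]

private lemma cube_le_exp {x : ℝ} (hx : 0 ≤ x) : x^3 ≤ 27 * Real.exp x := by
  have e := Real.add_one_le_exp (x/3)
  have h1 : x/3 ≤ Real.exp (x/3) := by linarith
  have h2 : (x/3)^3 ≤ Real.exp (x/3)^3 := pow_le_pow_left₀ (by positivity) h1 3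
  have m : Real.exp (x/3)^3 = Real.exp x := by
    rw [← Real.exp_nat_mul]; ring_nf
  nlinarith [h2, m]

private lemma abs_exp_sub_exp (a b : ℝ) :
    |Real.exp a - Real.exp b| ≤ Real.exp (max a b) * |a - b| := by
  wlog h : b ≤ a generalizing a b
  · rw [abs_sub_comm, abs_sub_comm a b, max_comm]
    exact this b a (le_of_not_ge h)
  rw [max_eq_left h, abs_of_nonneg (sub_nonneg.2 (Real.exp_le_exp.2 h)),
    abs_of_nonneg (sub_nonneg.2 h)]
  have e := Real.add_one_le_exp (b - a)
  have m : Real.exp (b - a) * Real.exp a = Real.exp b := by rw [← Real.exp_add]; ring_nf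
  nlinarith [Real.exp_pos a]

private lemma abs_log_sub_log {x y : ℝ} (hx : 0 < x) (hy : 0 < y) :
    |Real.log x - Real.log y| ≤ |x - y| / min x y := by
  wlog h : y ≤ x generalizing x y
  · rw [abs_sub_comm, abs_sub_comm x y, min_comm]
    exact this hy hx (le_of_not_ge h)
  rw [min_eq_right h, abs_of_nonneg (sub_nonneg.2 (Real.log_le_log hy h)),
    abs_of_nonneg (sub_nonneg.2 h), ← Real.log_div hx.ne' hy.ne']
  calc Real.log (x/y) ≤ x/y - 1 := Real.log_le_sub_one_of_pos (div_pos hx hy)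
    _ = (x - y)/y := by field_simp

private lemma expint {c a b : ℝ} (hc : 0 < c) (hab : a ≤ b) :
    ∫ t in a..b, Real.exp ((t - b)/c) ≤ c := by
  have hd : ∀ x ∈ Set.uIcc a b,
      HasDerivAt (fun t => c * Real.exp ((t - b)/c)) (Real.exp ((x - b)/c)) x := by
    intro x _
    have h1 : HasDerivAt (fun t : ℝ => (t - b)/c) (1/c) x :=
      ((hasDerivAt_id x).sub_const b).div_const c
    have h2 := (h1.exp).const_mul c
    refine h2.congr_deriv ?_
    field_simp
  have hint : IntervalIntegrable (fun t => Real.exp ((t - b)/c)) volume a b :=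
    (Real.continuous_exp.comp
      ((continuous_id.sub continuous_const).div_const c)).intervalIntegrable a b
  rw [integral_eq_sub_of_hasDerivAt hd hint]
  have h3 : Real.exp ((a - b)/c) ≥ 0 := (Real.exp_pos _).le
  have hb : Real.exp ((b - b)/c) = 1 := by simp
  rw [hb]
  nlinarith


private lemma icc_eventuallyEq_iic : Set.Icc (0:ℝ) 1 =ᶠ[nhds (1:ℝ)] Set.Iic 1 := by
  rw [Filter.eventuallyEq_set]
  filter_upwards [eventually_gt_nhds (show (0:ℝ) < 1 by norm_num)] with y hy
  simp [Set.mem_Icc, Set.mem_Iic, hy.le]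

private lemma deriv_loc (f : ℝ → ℝ) (hf : ContDiffOn ℝ (⊤ : ℕ∞) f (Set.Icc 0 1))
    (hf1 : f 1 = 0) (hf'1 : derivWithin f (Set.Iic 1) 1 = 1) :
    ∃ δ : ℝ, 0 < δ ∧ δ ≤ 1/2 ∧
      ∀ t ∈ Set.Icc (1-δ) 1, f t ≤ -(1-t)/2 ∧ -(2*(1-t)) ≤ f t := by
  have hud : UniqueDiffOn ℝ (Set.Icc (0:ℝ) 1) := uniqueDiffOn_Icc zero_lt_one
  have h1mem : (1:ℝ) ∈ Set.Icc (0:ℝ) 1 := by norm_num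
  have hF1 : derivWithin f (Set.Icc 0 1) 1 = 1 := by
    rw [derivWithin_congr_set icc_eventuallyEq_iic, hf'1]
  have hFc : ContinuousOn (derivWithin f (Set.Icc 0 1)) (Set.Icc 0 1) :=
    hf.continuousOn_derivWithin hud (by simp)
  have hcw : ContinuousWithinAt (derivWithin f (Set.Icc 0 1)) (Set.Icc 0 1) 1 :=
    hFc 1 h1mem
  have hpre : (derivWithin f (Set.Icc 0 1)) ⁻¹' Metric.ball 1 (1/2)
      ∈ nhdsWithin 1 (Set.Icc 0 1) := by
    apply hcw
    rw [hF1] at *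
    exact Metric.ball_mem_nhds _ (by norm_num)
  rw [Metric.mem_nhdsWithin_iff] at hpre
  obtain ⟨ε, hε, hsub⟩ := hpre
  set δ := min (ε/2) (1/2) with hδdef
  have hδpos : 0 < δ := by positivity
  have hδ2 : δ ≤ 1/2 := min_le_right _ _
  have hδε : δ < ε := lt_of_le_of_lt (min_le_left _ _) (by linarith)
  refine ⟨δ, hδpos, hδ2, ?_⟩
  have hdb : ∀ x ∈ Set.Icc (1-δ) 1,
      1/2 ≤ derivWithin f (Set.Icc 0 1) x ∧ derivWithin f (Set.Icc 0 1) x ≤ 2 := by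
    intro x hx
    have hx01 : x ∈ Set.Icc (0:ℝ) 1 := ⟨by linarith [hx.1], hx.2⟩
    have hball : x ∈ Metric.ball (1:ℝ) ε := by
      rw [Metric.mem_ball, Real.dist_eq, abs_sub_lt_iff]
      constructor <;> linarith [hx.1, hx.2]
    have hm := hsub ⟨hball, hx01⟩
    rw [Set.mem_preimage, Metric.mem_ball, Real.dist_eq, abs_sub_lt_iff] at hm
    constructor <;> linarith [hm.1, hm.2]
  have hderiv : ∀ x ∈ Set.Ioo (1-δ) 1,
      DifferentiableAt ℝ f x ∧ deriv f x = derivWithin f (Set.Icc 0 1) x := by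
    intro x hx
    have hx01 : x ∈ Set.Icc (0:ℝ) 1 := ⟨by linarith [hx.1], hx.2.le⟩
    have hnh : Set.Icc (0:ℝ) 1 ∈ nhds x := Icc_mem_nhds (by linarith [hx.1]) hx.2
    have hda : DifferentiableAt ℝ f x :=
      ((hf.differentiableOn (by simp)) x hx01).differentiableAt hnh
    exact ⟨hda, (hda.derivWithin (hud x hx01)).symm⟩
  have hsubset : Set.Icc (1-δ) 1 ⊆ Set.Icc (0:ℝ) 1 := by
    intro x hx; exact ⟨by linarith [hx.1], hx.2⟩
  have hmono : MonotoneOn (fun t => f t - t/2) (Set.Icc (1-δ) 1) := by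
    apply monotoneOn_of_deriv_nonneg (convex_Icc _ _)
    · exact (hf.continuousOn.mono hsubset).sub
        ((continuous_id.div_const 2).continuousOn)
    · rw [interior_Icc]
      intro x hx
      exact (((hderiv x hx).1).sub ((differentiable_id.div_const 2) x)).differentiableWithinAt
    · rw [interior_Icc]
      intro x hx
      have hd := hderiv x hx
      have hD : HasDerivAt (fun t => f t - t/2) (deriv f x - 1/2) x :=
        (hd.1.hasDerivAt).sub ((hasDerivAt_id x).div_const 2)
      rw [hD.deriv, hd.2]
      linarith [(hdb x ⟨hx.1.le, hx.2.le⟩).1]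
  have hanti : AntitoneOn (fun t => f t - 2*t) (Set.Icc (1-δ) 1) := by
    apply antitoneOn_of_deriv_nonpos (convex_Icc _ _)
    · exact (hf.continuousOn.mono hsubset).sub
        ((continuous_const.mul continuous_id).continuousOn)
    · rw [interior_Icc]
      intro x hx
      exact (((hderiv x hx).1).sub ((differentiable_const 2).mul differentiable_id x)).differentiableWithinAt
    · rw [interior_Icc]
      intro x hx
      have hd := hderiv x hx
      have hD : HasDerivAt (fun t => f t - 2*t) (deriv f x - 2) x := by
        have := (hd.1.hasDerivAt).sub ((hasDerivAt_id x).const_mul 2)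
        simp only [mul_one] at this
        exact this
      rw [hD.deriv, hd.2]
      linarith [(hdb x ⟨hx.1.le, hx.2.le⟩).2]
  intro t ht
  have h1m : (1:ℝ) ∈ Set.Icc (1-δ) 1 := ⟨by linarith, le_refl 1⟩
  constructor
  · have := hmono ht h1m ht.2
    simp only [hf1] at this
    linarith
  · have := hanti ht h1m ht.2
    simp only [hf1] at this
    linarith

private lemma taylor_bound (h : ℝ → ℝ) (hh : ContDiffOn ℝ (⊤ : ℕ∞) h (Set.Icc 0 1))
    (hh1 : h 1 = 0) (hh'1 : derivWithin h (Set.Icc 0 1) 1 = 0) :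
    ∃ M : ℝ, 0 ≤ M ∧ ∀ t ∈ Set.Icc (0:ℝ) 1, |h t| ≤ M * (1-t)^2 := by
  have hud : UniqueDiffOn ℝ (Set.Icc (0:ℝ) 1) := uniqueDiffOn_Icc zero_lt_one
  have h1mem : (1:ℝ) ∈ Set.Icc (0:ℝ) 1 := by norm_num
  set H := derivWithin h (Set.Icc 0 1) with hHdef
  have hHsm : ContDiffOn ℝ (⊤ : ℕ∞) H (Set.Icc 0 1) := hh.derivWithin hud (by simp)
  have hH2c : ContinuousOn (derivWithin H (Set.Icc 0 1)) (Set.Icc 0 1) :=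
    hHsm.continuousOn_derivWithin hud (by simp)
  obtain ⟨M, hM⟩ := (isCompact_Icc).exists_bound_of_continuousOn hH2c
  have hM0 : 0 ≤ M := le_trans (norm_nonneg _) (hM 1 h1mem)
  have hLip : ∀ t ∈ Set.Icc (0:ℝ) 1, |H t| ≤ M * (1-t) := by
    intro t ht
    have := Convex.norm_image_sub_le_of_norm_derivWithin_le
      (hHsm.differentiableOn (by simp)) hM (convex_Icc _ _) h1mem ht
    rw [hh'1] at this
    simp only [Real.norm_eq_abs, sub_zero] at this
    calc |H t| ≤ M * |t - 1| := this
      _ = M * (1-t) := by rw [abs_of_nonpos (by linarith [ht.2]), neg_sub]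
  have hderiv : ∀ x ∈ Set.Ioo (0:ℝ) 1,
      DifferentiableAt ℝ h x ∧ deriv h x = H x := by
    intro x hx
    have hx01 : x ∈ Set.Icc (0:ℝ) 1 := ⟨hx.1.le, hx.2.le⟩
    have hnh : Set.Icc (0:ℝ) 1 ∈ nhds x := Icc_mem_nhds hx.1 hx.2
    have hda : DifferentiableAt ℝ h x :=
      ((hh.differentiableOn (by simp)) x hx01).differentiableAt hnh
    exact ⟨hda, (hda.derivWithin (hud x hx01)).symm⟩
  have hpoly : ∀ x : ℝ, HasDerivAt (fun t : ℝ => M * (1-t)^2) (-(2 * M * (1-x))) x := by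
    intro x
    have h1 : HasDerivAt (fun t : ℝ => (1-t)^2) (2 * (1-x)^1 * (-1)) x :=
      (((hasDerivAt_id x).const_sub 1)).pow 2
    have := h1.const_mul M
    refine this.congr_deriv ?_
    ring
  -- upper: v = h - M(1-t)^2 monotone
  have hcont1 : Continuous (fun t : ℝ => M * (1-t)^2) := by continuity
  have hmono : MonotoneOn (fun t => h t - M * (1-t)^2) (Set.Icc (0:ℝ) 1) := by
    apply monotoneOn_of_deriv_nonneg (convex_Icc _ _)
    · exact hh.continuousOn.sub hcont1.continuousOn
    · rw [interior_Icc]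
      intro x hx
      exact ((hderiv x hx).1.sub (hpoly x).differentiableAt).differentiableWithinAt
    · rw [interior_Icc]
      intro x hx
      have hd := hderiv x hx
      have hD : HasDerivAt (fun t => h t - M * (1-t)^2)
          (deriv h x - -(2 * M * (1-x))) x := (hd.1.hasDerivAt).sub (hpoly x)
      rw [hD.deriv, hd.2]
      have hL := hLip x ⟨hx.1.le, hx.2.le⟩
      rw [abs_le] at hL
      nlinarith [hx.2, hL.1]
  have hanti : AntitoneOn (fun t => h t + M * (1-t)^2) (Set.Icc (0:ℝ) 1) := by
    apply antitoneOn_of_deriv_nonpos (convex_Icc _ _)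
    · exact hh.continuousOn.add hcont1.continuousOn
    · rw [interior_Icc]
      intro x hx
      exact ((hderiv x hx).1.add (hpoly x).differentiableAt).differentiableWithinAt
    · rw [interior_Icc]
      intro x hx
      have hd := hderiv x hx
      have hD : HasDerivAt (fun t => h t + M * (1-t)^2)
          (deriv h x + -(2 * M * (1-x))) x := (hd.1.hasDerivAt).add (hpoly x)
      rw [hD.deriv, hd.2]
      have hL := hLip x ⟨hx.1.le, hx.2.le⟩
      rw [abs_le] at hL
      nlinarith [hx.2, hL.2]
  refine ⟨M, hM0, ?_⟩
  intro t ht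
  rw [abs_le]
  constructor
  · have := hanti ht h1mem ht.2
    simp only [hh1] at this
    nlinarith [this]
  · have := hmono ht h1mem ht.2
    simp only [hh1] at this
    nlinarith [this]

-- exp(-(a/β)) ≤ 27 β³ / a³
private lemma exp_neg_le_cube {a β : ℝ} (ha : 0 < a) (hβ : 0 < β) :
    Real.exp (-(a/β)) ≤ 27 * β^3 / a^3 := by
  have hc := cube_le_exp (x := a/β) (by positivity)
  have hprod : Real.exp (a/β) * Real.exp (-(a/β)) = 1 := by
    rw [← Real.exp_add]; simp
  rw [le_div_iff₀ (by positivity)]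
  have hd : (a/β)^3 * β^3 = a^3 := by field_simp
  calc Real.exp (-(a/β)) * a^3 = (a/β)^3 * β^3 * Real.exp (-(a/β)) := by
        rw [hd]; ring
    _ ≤ 27 * Real.exp (a/β) * β^3 * Real.exp (-(a/β)) := by
        have h5 := mul_le_mul_of_nonneg_right hc
          (show (0:ℝ) ≤ β^3 * Real.exp (-(a/β)) by positivity)
        nlinarith [h5]
    _ = 27 * β^3 * (Real.exp (a/β) * Real.exp (-(a/β))) := by ring
    _ = 27 * β^3 := by rw [hprod, mul_one]

private lemma keyint (F : ℝ → ℝ) (hFc : ContinuousOn F (Set.Icc 0 1))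
    {δ a β : ℝ} (hδ : 0 < δ) (hδ2 : δ ≤ 1/2) (ha : 0 < a) (hβ : 0 < β)
    (h1 : ∀ t ∈ Set.Icc (0:ℝ) (1-δ), F t ≤ -a)
    (h2 : ∀ t ∈ Set.Icc (1-δ) 1, F t ≤ -(1-t)/2) :
    ∫ t in (0:ℝ)..1, Real.exp (F t / β) * (1-t)^2 ≤ (27/a^3 + 256) * β^3 := by
  have hδ1 : (0:ℝ) ≤ 1 - δ := by linarith
  have hδ1' : 1 - δ ≤ (1:ℝ) := by linarith
  have hφc : ContinuousOn (fun t => Real.exp (F t / β) * (1-t)^2) (Set.Icc 0 1) :=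
    (Real.continuous_exp.comp_continuousOn (hFc.div_const β)).mul
      (((continuous_const.sub continuous_id).pow 2).continuousOn)
  have hint01 : IntervalIntegrable (fun t => Real.exp (F t / β) * (1-t)^2)
      volume 0 1 := by
    apply ContinuousOn.intervalIntegrable
    rwa [Set.uIcc_of_le (by norm_num)]
  have hintL : IntervalIntegrable (fun t => Real.exp (F t / β) * (1-t)^2)
      volume 0 (1-δ) :=
    hint01.mono_set (by rw [Set.uIcc_of_le hδ1, Set.uIcc_of_le (by norm_num)]
                        exact Set.Icc_subset_Icc le_rfl hδ1')
  have hintR : IntervalIntegrable (fun t => Real.exp (F t / β) * (1-t)^2)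
      volume (1-δ) 1 :=
    hint01.mono_set (by rw [Set.uIcc_of_le hδ1', Set.uIcc_of_le (by norm_num)]
                        exact Set.Icc_subset_Icc hδ1 le_rfl)
  rw [← integral_add_adjacent_intervals hintL hintR]
  have hpart1 : ∫ t in (0:ℝ)..(1-δ), Real.exp (F t / β) * (1-t)^2 ≤ 27/a^3 * β^3 := by
    have hb : ∀ t ∈ Set.Icc (0:ℝ) (1-δ),
        Real.exp (F t / β) * (1-t)^2 ≤ 27 * β^3 / a^3 := by
      intro t ht
      have hFt : F t / β ≤ -(a/β) := by
        rw [← neg_div]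
        gcongr
        exact h1 t ht
      have he : Real.exp (F t / β) ≤ 27 * β^3 / a^3 :=
        le_trans (Real.exp_le_exp.2 hFt) (exp_neg_le_cube ha hβ)
      have ht2 : (1-t)^2 ≤ 1 := by nlinarith [ht.1, ht.2]
      nlinarith [Real.exp_pos (F t / β), he, ht2]
    calc ∫ t in (0:ℝ)..(1-δ), Real.exp (F t / β) * (1-t)^2
        ≤ ∫ _t in (0:ℝ)..(1-δ), 27 * β^3 / a^3 :=
          integral_mono_on hδ1 hintL (intervalIntegrable_const) hb
      _ = (1-δ) * (27 * β^3 / a^3) := by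
          rw [intervalIntegral.integral_const, smul_eq_mul]
          ring
      _ ≤ 1 * (27 * β^3 / a^3) := by
          have : (0:ℝ) ≤ 27 * β^3 / a^3 := by positivity
          nlinarith
      _ = 27/a^3 * β^3 := by ring
  have hpart2 : ∫ t in (1-δ)..1, Real.exp (F t / β) * (1-t)^2 ≤ 256 * β^3 := by
    have hb : ∀ t ∈ Set.Icc (1-δ) 1,
        Real.exp (F t / β) * (1-t)^2 ≤ 64 * β^2 * Real.exp ((t-1)/(4*β)) := by
      intro t ht
      have hu : 0 ≤ 1 - t := by linarith [ht.2]
      have hsq := sq_le_exp (x := (1-t)/(4*β)) (by positivity)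
      have hu2 : (1-t)^2 ≤ 64 * β^2 * Real.exp ((1-t)/(4*β)) := by
        have h4 : ((1-t)/(4*β))^2 = (1-t)^2 / (16*β^2) := by
          rw [div_pow]; ring_nf
        rw [h4] at hsq
        rw [div_le_iff₀ (by positivity)] at hsq
        nlinarith
      have hF : Real.exp (F t / β) ≤ Real.exp (-(1-t)/(2*β)) := by
        apply Real.exp_le_exp.2
        rw [div_le_div_iff₀ hβ (by positivity)]
        nlinarith [h2 t ht]
      calc Real.exp (F t / β) * (1-t)^2
          ≤ Real.exp (-(1-t)/(2*β)) * (64 * β^2 * Real.exp ((1-t)/(4*β))) := by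
            have := Real.exp_pos (-(1-t)/(2*β))
            nlinarith [Real.exp_pos (F t / β), mul_le_mul_of_nonneg_left hu2 (Real.exp_pos (-(1-t)/(2*β))).le,
              mul_le_mul_of_nonneg_right hF (sq_nonneg (1-t))]
        _ = 64 * β^2 * (Real.exp (-(1-t)/(2*β)) * Real.exp ((1-t)/(4*β))) := by ring
        _ = 64 * β^2 * Real.exp ((t-1)/(4*β)) := by
            rw [← Real.exp_add]
            congr 1
            field_simp
            ring
    have hintc : IntervalIntegrable (fun t => 64 * β^2 * Real.exp ((t-1)/(4*β)))
        volume (1-δ) 1 :=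
      (continuous_const.mul (Real.continuous_exp.comp
        ((continuous_id.sub continuous_const).div_const (4*β)))).intervalIntegrable _ _
    calc ∫ t in (1-δ)..1, Real.exp (F t / β) * (1-t)^2
        ≤ ∫ t in (1-δ)..1, 64 * β^2 * Real.exp ((t-1)/(4*β)) :=
          integral_mono_on hδ1' hintR hintc hb
      _ = 64 * β^2 * ∫ t in (1-δ)..1, Real.exp ((t-1)/(4*β)) := by
          rw [intervalIntegral.integral_const_mul]
      _ ≤ 64 * β^2 * (4*β) := by
          have := expint (c := 4*β) (a := 1-δ) (b := 1) (by positivity) hδ1'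
          gcongr
      _ = 256 * β^3 := by ring
  calc (∫ t in (0:ℝ)..(1-δ), Real.exp (F t / β) * (1-t)^2)
        + ∫ t in (1-δ)..1, Real.exp (F t / β) * (1-t)^2
      ≤ 27/a^3 * β^3 + 256 * β^3 := add_le_add hpart1 hpart2
    _ = (27/a^3 + 256) * β^3 := by ring

open MeasureTheory Asymptotics Filter

set_option maxHeartbeats 1600000 in
/-- For smooth strictly increasing `f, g` on `[0,1]` with `f(1) = g(1) = 0` and
`f'(1) = g'(1) = 1` (left derivatives), the KL divergence between the exponentially
tilted densities `p_f(t) = exp(f(t)/β)/Z_f` and `p_g(t) = exp(g(t)/β)/Z_g` on `[0,1]`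
is `O(β)` as `β → 0⁺`. -/
theorem stmt14 (f g : ℝ → ℝ)
    (hf : ContDiffOn ℝ (⊤ : ℕ∞) f (Set.Icc 0 1)) (hg : ContDiffOn ℝ (⊤ : ℕ∞) g (Set.Icc 0 1))
    (hfm : StrictMonoOn f (Set.Icc 0 1)) (hgm : StrictMonoOn g (Set.Icc 0 1))
    (hf1 : f 1 = 0) (hg1 : g 1 = 0)
    (hf'1 : derivWithin f (Set.Iic 1) 1 = 1)
    (hg'1 : derivWithin g (Set.Iic 1) 1 = 1) :
    (fun β : ℝ => ∫ t in (0 : ℝ)..1,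
        (Real.exp (f t / β) / ∫ s in (0 : ℝ)..1, Real.exp (f s / β))
          * Real.log ((Real.exp (f t / β) / ∫ s in (0 : ℝ)..1, Real.exp (f s / β))
              / (Real.exp (g t / β) / ∫ s in (0 : ℝ)..1, Real.exp (g s / β))))
      =O[nhdsWithin 0 (Set.Ioi 0)] fun β : ℝ => β := by
  have hud : UniqueDiffOn ℝ (Set.Icc (0:ℝ) 1) := uniqueDiffOn_Icc zero_lt_one
  have h1mem : (1:ℝ) ∈ Set.Icc (0:ℝ) 1 := by norm_num
  have hfc := hf.continuousOn
  have hgc := hg.continuousOn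
  -- localization of f, g near 1
  obtain ⟨δf, hδfpos, hδf2, hfb⟩ := deriv_loc f hf hf1 hf'1
  obtain ⟨δg, hδgpos, hδg2, hgb⟩ := deriv_loc g hg hg1 hg'1
  set δ := min δf δg with hδdef
  have hδpos : 0 < δ := lt_min hδfpos hδgpos
  have hδ2 : δ ≤ 1/2 := le_trans (min_le_left _ _) hδf2
  have hfb' : ∀ t ∈ Set.Icc (1-δ) 1, f t ≤ -(1-t)/2 ∧ -(2*(1-t)) ≤ f t := by
    intro t ht
    exact hfb t ⟨by have := min_le_left δf δg; linarith [ht.1], ht.2⟩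
  have hgb' : ∀ t ∈ Set.Icc (1-δ) 1, g t ≤ -(1-t)/2 ∧ -(2*(1-t)) ≤ g t := by
    intro t ht
    exact hgb t ⟨by have := min_le_right δf δg; linarith [ht.1], ht.2⟩
  -- Taylor bound for f - g
  have hdf : DifferentiableWithinAt ℝ f (Set.Icc 0 1) 1 := (hf.differentiableOn (by simp)) 1 h1mem
  have hdg : DifferentiableWithinAt ℝ g (Set.Icc 0 1) 1 := (hg.differentiableOn (by simp)) 1 h1mem
  have hfd1 : derivWithin f (Set.Icc 0 1) 1 = 1 := by
    rw [derivWithin_congr_set icc_eventuallyEq_iic, hf'1]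
  have hgd1 : derivWithin g (Set.Icc 0 1) 1 = 1 := by
    rw [derivWithin_congr_set icc_eventuallyEq_iic, hg'1]
  have hsubd : derivWithin (fun y => f y - g y) (Set.Icc 0 1) 1 = 0 := by
    rw [derivWithin_fun_sub hdf hdg, hfd1, hgd1]
    norm_num
  obtain ⟨M, hM0, hM⟩ := taylor_bound (fun t => f t - g t) (hf.sub hg)
    (by simp [hf1, hg1]) hsubd
  -- the uniform negative bound away from 1
  have h1δmem : 1 - δ ∈ Set.Icc (0:ℝ) 1 := ⟨by linarith, by linarith⟩
  have h1δlt : 1 - δ < 1 := by linarith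
  set a := min (-(f (1-δ))) (-(g (1-δ))) with hadef
  have hfneg : f (1-δ) < 0 := by
    have := hfm h1δmem h1mem h1δlt
    linarith [hf1 ▸ this]
  have hgneg : g (1-δ) < 0 := by
    have := hgm h1δmem h1mem h1δlt
    linarith [hg1 ▸ this]
  have ha : 0 < a := lt_min (by linarith) (by linarith)
  have hfa : ∀ t ∈ Set.Icc (0:ℝ) (1-δ), f t ≤ -a := by
    intro t ht
    have h1 : f t ≤ f (1-δ) := hfm.monotoneOn ⟨ht.1, by linarith [ht.2]⟩ h1δmem ht.2
    have h2 : a ≤ -(f (1-δ)) := min_le_left _ _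
    linarith
  have hga : ∀ t ∈ Set.Icc (0:ℝ) (1-δ), g t ≤ -a := by
    intro t ht
    have h1 : g t ≤ g (1-δ) := hgm.monotoneOn ⟨ht.1, by linarith [ht.2]⟩ h1δmem ht.2
    have h2 : a ≤ -(g (1-δ)) := min_le_right _ _
    linarith
  set CB := 27/a^3 + 256 with hCBdef
  have hCB : 0 < CB := by positivity
  rw [Asymptotics.isBigO_iff]
  refine ⟨2 * Real.exp 2 * M * CB, ?_⟩
  have hev : Set.Ioo (0:ℝ) δ ∈ nhdsWithin 0 (Set.Ioi 0) :=
    Ioo_mem_nhdsGT_of_mem ⟨le_refl 0, hδpos⟩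
  filter_upwards [hev] with β hβm
  have hβ0 : 0 < β := hβm.1
  have hβδ : β < δ := hβm.2
  set Zf := ∫ s in (0:ℝ)..1, Real.exp (f s / β) with hZfdef
  set Zg := ∫ s in (0:ℝ)..1, Real.exp (g s / β) with hZgdef
  clear_value Zf Zg
  -- integrability
  have hef : ContinuousOn (fun t => Real.exp (f t / β)) (Set.Icc 0 1) :=
    Real.continuous_exp.comp_continuousOn (hfc.div_const β)
  have heg : ContinuousOn (fun t => Real.exp (g t / β)) (Set.Icc 0 1) :=
    Real.continuous_exp.comp_continuousOn (hgc.div_const β)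
  have hIf : IntervalIntegrable (fun t => Real.exp (f t / β)) volume 0 1 := by
    apply ContinuousOn.intervalIntegrable
    rwa [Set.uIcc_of_le (by norm_num : (0:ℝ) ≤ 1)]
  have hIg : IntervalIntegrable (fun t => Real.exp (g t / β)) volume 0 1 := by
    apply ContinuousOn.intervalIntegrable
    rwa [Set.uIcc_of_le (by norm_num : (0:ℝ) ≤ 1)]
  -- lower bound for Zf and Zg
  have hβ1 : (0:ℝ) ≤ 1 - β := by linarith
  have hZlow : ∀ (F : ℝ → ℝ), (∀ t ∈ Set.Icc (1-δ) 1, -(2*(1-t)) ≤ F t) →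
      IntervalIntegrable (fun t => Real.exp (F t / β)) volume 0 1 →
      Real.exp (-2) * β ≤ ∫ s in (0:ℝ)..1, Real.exp (F s / β) := by
    intro F hFb hIF
    have hIFL : IntervalIntegrable (fun t => Real.exp (F t / β)) volume 0 (1-β) :=
      hIF.mono_set (by
        rw [Set.uIcc_of_le hβ1, Set.uIcc_of_le (by norm_num : (0:ℝ) ≤ 1)]
        exact Set.Icc_subset_Icc le_rfl (by linarith))
    have hIFR : IntervalIntegrable (fun t => Real.exp (F t / β)) volume (1-β) 1 :=
      hIF.mono_set (by
        rw [Set.uIcc_of_le (by linarith : 1-β ≤ (1:ℝ)),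
          Set.uIcc_of_le (by norm_num : (0:ℝ) ≤ 1)]
        exact Set.Icc_subset_Icc hβ1 le_rfl)
    rw [← intervalIntegral.integral_add_adjacent_intervals hIFL hIFR]
    have hnn : 0 ≤ ∫ s in (0:ℝ)..(1-β), Real.exp (F s / β) :=
      intervalIntegral.integral_nonneg hβ1 (fun u _ => (Real.exp_pos _).le)
    have hlb : Real.exp (-2) * β ≤ ∫ s in (1-β)..1, Real.exp (F s / β) := by
      have hmono := intervalIntegral.integral_mono_on (by linarith : 1-β ≤ (1:ℝ))
        (_root_.intervalIntegrable_const (c := Real.exp (-2))) hIFR ?_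
      · calc Real.exp (-2) * β = (1 - (1-β)) • Real.exp (-2) := by
              rw [smul_eq_mul]; ring
          _ = ∫ _s in (1-β)..1, Real.exp (-2) := by
              rw [intervalIntegral.integral_const]
          _ ≤ _ := hmono
      · intro t ht
        have hmem : t ∈ Set.Icc (1-δ) 1 := ⟨by linarith [ht.1], ht.2⟩
        have h2 := hFb t hmem
        apply Real.exp_le_exp.2
        rw [le_div_iff₀ hβ0]
        nlinarith [ht.1, ht.2, h2]
    linarith
  have hZf_lb : Real.exp (-2) * β ≤ Zf := by
    rw [hZfdef]; exact hZlow f (fun t ht => (hfb' t ht).2) hIf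
  have hZg_lb : Real.exp (-2) * β ≤ Zg := by
    rw [hZgdef]; exact hZlow g (fun t ht => (hgb' t ht).2) hIg
  have hZfpos : 0 < Zf := lt_of_lt_of_le (by positivity) hZf_lb
  have hZgpos : 0 < Zg := lt_of_lt_of_le (by positivity) hZg_lb
  -- key integral bounds
  have hKf : ∫ t in (0:ℝ)..1, Real.exp (f t / β) * (1-t)^2 ≤ CB * β^3 := by
    rw [hCBdef]
    exact keyint f hfc hδpos hδ2 ha hβ0 hfa (fun t ht => (hfb' t ht).1)
  have hKm : ∫ t in (0:ℝ)..1, Real.exp (max (f t) (g t) / β) * (1-t)^2 ≤ CB * β^3 := by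
    rw [hCBdef]
    refine keyint (fun t => max (f t) (g t)) (continuous_max.comp_continuousOn (ContinuousOn.prodMk hfc hgc)) hδpos hδ2 ha hβ0 ?_ ?_
    · exact fun t ht => max_le (hfa t ht) (hga t ht)
    · exact fun t ht => max_le (hfb' t ht).1 (hgb' t ht).1
  -- |Zg - Zf| bound
  have hImaxInt : IntervalIntegrable
      (fun t => M/β * (Real.exp (max (f t) (g t) / β) * (1-t)^2)) volume 0 1 := by
    apply ContinuousOn.intervalIntegrable
    rw [Set.uIcc_of_le (by norm_num : (0:ℝ) ≤ 1)]
    exact continuousOn_const.mul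
      ((Real.continuous_exp.comp_continuousOn ((continuous_max.comp_continuousOn (ContinuousOn.prodMk hfc hgc)).div_const β)).mul
        (((continuous_const.sub continuous_id).pow 2).continuousOn))
  have hZdiff : |Zg - Zf| ≤ M * CB * β^2 := by
    have heq : Zg - Zf = ∫ t in (0:ℝ)..1, (Real.exp (g t / β) - Real.exp (f t / β)) := by
      rw [intervalIntegral.integral_sub hIg hIf, hZfdef, hZgdef]
    have hpt : ∀ t ∈ Set.Icc (0:ℝ) 1,
        |Real.exp (g t / β) - Real.exp (f t / β)|
          ≤ M/β * (Real.exp (max (f t) (g t) / β) * (1-t)^2) := by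
      intro t ht
      have h1 := abs_exp_sub_exp (g t / β) (f t / β)
      have hmax : max (g t / β) (f t / β) = max (f t) (g t) / β := by
        rw [max_div_div_right hβ0.le, max_comm]
      have h2 : |g t / β - f t / β| = |g t - f t| / β := by
        rw [div_sub_div_same, abs_div, abs_of_pos hβ0]
      have h3 : |g t - f t| ≤ M * (1-t)^2 := by
        rw [abs_sub_comm]
        exact hM t ht
      rw [hmax, h2] at h1
      calc |Real.exp (g t / β) - Real.exp (f t / β)|
          ≤ Real.exp (max (f t) (g t) / β) * (|g t - f t| / β) := h1
        _ ≤ Real.exp (max (f t) (g t) / β) * (M * (1-t)^2 / β) := by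
            gcongr
        _ = M/β * (Real.exp (max (f t) (g t) / β) * (1-t)^2) := by ring
    have habsInt : IntervalIntegrable
        (fun t => |Real.exp (g t / β) - Real.exp (f t / β)|) volume 0 1 :=
      (hIg.sub hIf).abs
    calc |Zg - Zf| = |∫ t in (0:ℝ)..1, (Real.exp (g t / β) - Real.exp (f t / β))| := by
          rw [heq]
      _ ≤ ∫ t in (0:ℝ)..1, |Real.exp (g t / β) - Real.exp (f t / β)| :=
          intervalIntegral.abs_integral_le_integral_abs (by norm_num)
      _ ≤ ∫ t in (0:ℝ)..1, M/β * (Real.exp (max (f t) (g t) / β) * (1-t)^2) :=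
          intervalIntegral.integral_mono_on (by norm_num) habsInt hImaxInt hpt
      _ = M/β * ∫ t in (0:ℝ)..1, Real.exp (max (f t) (g t) / β) * (1-t)^2 :=
          intervalIntegral.integral_const_mul _ _
      _ ≤ M/β * (CB * β^3) := by
          have hMβ : 0 ≤ M/β := by positivity
          exact mul_le_mul_of_nonneg_left hKm hMβ
      _ = M * CB * β^2 := by field_simp
  -- rewrite the integrand
  have hrw : (fun t => Real.exp (f t / β) / Zf
        * Real.log (Real.exp (f t / β) / Zf / (Real.exp (g t / β) / Zg)))
      = fun t => 1/(β*Zf) * (Real.exp (f t / β) * (f t - g t))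
          + (Real.log Zg - Real.log Zf)/Zf * Real.exp (f t / β) := by
    funext t
    have e1 : Real.log (Real.exp (f t / β) / Zf / (Real.exp (g t / β) / Zg))
        = f t / β - g t / β + (Real.log Zg - Real.log Zf) := by
      rw [Real.log_div (by positivity) (by positivity),
        Real.log_div (Real.exp_ne_zero _) hZfpos.ne',
        Real.log_div (Real.exp_ne_zero _) hZgpos.ne',
        Real.log_exp, Real.log_exp]
      ring
    rw [e1]
    field_simp [hβ0.ne', hZfpos.ne']
  rw [hrw]
  -- split the integral
  have hIfg : IntervalIntegrable
      (fun t => Real.exp (f t / β) * (f t - g t)) volume 0 1 := by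
    apply ContinuousOn.intervalIntegrable
    rw [Set.uIcc_of_le (by norm_num : (0:ℝ) ≤ 1)]
    exact hef.mul (hfc.sub hgc)
  have hint1 : IntervalIntegrable
      (fun t => 1/(β*Zf) * (Real.exp (f t / β) * (f t - g t))) volume 0 1 :=
    hIfg.const_mul _
  have hint2 : IntervalIntegrable
      (fun t => (Real.log Zg - Real.log Zf)/Zf * Real.exp (f t / β)) volume 0 1 :=
    hIf.const_mul _
  rw [intervalIntegral.integral_add hint1 hint2,
    intervalIntegral.integral_const_mul, intervalIntegral.integral_const_mul,
    ← hZfdef, div_mul_cancel₀ _ hZfpos.ne']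
  -- bound the two pieces
  have hI1 : |∫ t in (0:ℝ)..1, Real.exp (f t / β) * (f t - g t)| ≤ M * (CB * β^3) := by
    have habsInt : IntervalIntegrable
        (fun t => |Real.exp (f t / β) * (f t - g t)|) volume 0 1 := hIfg.abs
    have hMint : IntervalIntegrable
        (fun t => M * (Real.exp (f t / β) * (1-t)^2)) volume 0 1 := by
      apply ContinuousOn.intervalIntegrable
      rw [Set.uIcc_of_le (by norm_num : (0:ℝ) ≤ 1)]
      exact continuousOn_const.mul
        (hef.mul (((continuous_const.sub continuous_id).pow 2).continuousOn))
    calc |∫ t in (0:ℝ)..1, Real.exp (f t / β) * (f t - g t)|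
        ≤ ∫ t in (0:ℝ)..1, |Real.exp (f t / β) * (f t - g t)| :=
          intervalIntegral.abs_integral_le_integral_abs (by norm_num)
      _ ≤ ∫ t in (0:ℝ)..1, M * (Real.exp (f t / β) * (1-t)^2) := by
          apply intervalIntegral.integral_mono_on (by norm_num) habsInt hMint
          intro t ht
          rw [abs_mul, abs_of_pos (Real.exp_pos _)]
          calc Real.exp (f t / β) * |f t - g t|
              ≤ Real.exp (f t / β) * (M * (1-t)^2) := by
                exact mul_le_mul_of_nonneg_left (hM t ht) (Real.exp_pos _).le
            _ = M * (Real.exp (f t / β) * (1-t)^2) := by ring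
      _ = M * ∫ t in (0:ℝ)..1, Real.exp (f t / β) * (1-t)^2 :=
          intervalIntegral.integral_const_mul _ _
      _ ≤ M * (CB * β^3) := mul_le_mul_of_nonneg_left hKf hM0
  have hA : |1/(β*Zf) * ∫ t in (0:ℝ)..1, Real.exp (f t / β) * (f t - g t)|
      ≤ Real.exp 2 * M * CB * β := by
    rw [abs_mul, abs_of_pos (show (0:ℝ) < 1/(β*Zf) from one_div_pos.mpr (mul_pos hβ0 hZfpos))]
    have h1 : 1/(β*Zf) ≤ 1/(β*(Real.exp (-2)*β)) := by
      apply one_div_le_one_div_of_le (by positivity)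
      nlinarith [hZf_lb, hβ0]
    calc 1/(β*Zf) * |∫ t in (0:ℝ)..1, Real.exp (f t / β) * (f t - g t)|
        ≤ 1/(β*(Real.exp (-2)*β)) * (M * (CB * β^3)) :=
          mul_le_mul h1 hI1 (abs_nonneg _) (by positivity)
      _ = Real.exp 2 * M * CB * β := by
          rw [Real.exp_neg]
          have h2 := Real.exp_pos 2
          field_simp
  have hB : |Real.log Zg - Real.log Zf| ≤ Real.exp 2 * M * CB * β := by
    have h0 := abs_log_sub_log hZgpos hZfpos
    have hmin : Real.exp (-2)*β ≤ min Zg Zf := le_min hZg_lb hZf_lb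
    calc |Real.log Zg - Real.log Zf| ≤ |Zg - Zf| / min Zg Zf := h0
      _ ≤ (M * CB * β^2) / (Real.exp (-2)*β) :=
          div_le_div₀ (by positivity) hZdiff (by positivity) hmin
      _ = Real.exp 2 * M * CB * β := by
          rw [Real.exp_neg]
          have h2 := Real.exp_pos 2
          field_simp
  calc ‖1/(β*Zf) * (∫ t in (0:ℝ)..1, Real.exp (f t / β) * (f t - g t))
        + (Real.log Zg - Real.log Zf)‖
      ≤ |1/(β*Zf) * ∫ t in (0:ℝ)..1, Real.exp (f t / β) * (f t - g t)|
        + |Real.log Zg - Real.log Zf| := abs_add_le _ _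
    _ ≤ Real.exp 2 * M * CB * β + Real.exp 2 * M * CB * β := add_le_add hA hB
    _ = 2 * Real.exp 2 * M * CB * β := by ring
    _ = 2 * Real.exp 2 * M * CB * ‖β‖ := by
        rw [Real.norm_eq_abs, abs_of_pos hβ0]
end
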